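/- For every α ∈ (0,1), c > 0, a > 0 and t > 0, the number variance grows like L^{1−α}: lim_{L→∞} L^{α−1} V_t^{α,c,a}[L] = (4ct/(aπ)) ∫₀^∞ φ^{α−2} (1 − cos φ) dφ, and this limit is a finite strictly positive constant. -/

import Mathlib

open MeasureTheory Filter Set

/-- The averaged number variance of the infinite system of independent symmetric
`α`-stable processes started from the equispaced-averaged configuration. -/
noncomputable def numVar (α c a t L : ℝ) : ℝ :=
  L / a + (2 / Real.pi) * ∫ θ in Set.Ioi (0:ℝ),
    Real.exp (-(2 * c * t * (θ / a) ^ α)) * (Real.cos (L * θ / a) - 1) / θ ^ 2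

/-!
The identity `∫₀^∞ (1 - cos x) / x² dx = π / 2` (obtained by writing
`1 / x² = ∫₀^∞ s e^{-xs} ds` and integrating in `x` first) turns the term `L / a` into
`(2/π) ∫ (1 - cos (Lθ/a)) / θ² dθ`, so that
`V_t[L] = (2/π) ∫ (1 - e^{-2ct(θ/a)^α}) (1 - cos (Lθ/a)) / θ² dθ`.
After the substitution `φ = Lθ/a`, the factor `L^α (1 - e^{-2ct(φ/L)^α})` is bounded by and
tends to `2ct φ^α`, and for `α < 1` the majorant `φ^(α-2) (1 - cos φ)` is integrable, so
dominated convergence gives the limit.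
-/

open Real Topology

lemma integrableOn_rpow_mul_one_sub_cos {β : ℝ} (hβ0 : 0 ≤ β) (hβ1 : β < 1) (r : ℝ) :
    IntegrableOn (fun x : ℝ => x ^ (β - 2) * (1 - cos (r * x))) (Ioi 0) := by
  have hmeas : Measurable fun x : ℝ => x ^ (β - 2) * (1 - cos (r * x)) := by fun_prop
  have hnorm : ∀ x ∈ Ioi (0:ℝ),
      ‖x ^ (β - 2) * (1 - cos (r * x))‖ = x ^ (β - 2) * (1 - cos (r * x)) := fun x hx =>
    norm_of_nonneg (mul_nonneg (rpow_nonneg hx.le _) (sub_nonneg.2 (cos_le_one _)))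
  rw [← Ioc_union_Ioi_eq_Ioi zero_le_one]
  refine IntegrableOn.union ?_ ?_
  · -- `1 - cos (r x) ≤ (r x)² / 2` absorbs the singularity at `0`
    refine Integrable.mono' (integrableOn_const (C := r ^ 2 / 2) measure_Ioc_lt_top.ne)
      hmeas.aestronglyMeasurable ((ae_restrict_iff' measurableSet_Ioc).2 (ae_of_all _ ?_))
    rintro x ⟨hx0, hx1⟩
    rw [hnorm x hx0]
    calc x ^ (β - 2) * (1 - cos (r * x)) ≤ x ^ (β - 2) * ((r * x) ^ 2 / 2) := by
          gcongr; linarith [one_sub_sq_div_two_le_cos (x := r * x)]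
      _ = r ^ 2 / 2 * x ^ β := by
          rw [rpow_sub hx0, rpow_two]; field_simp
      _ ≤ r ^ 2 / 2 := mul_le_of_le_one_right (by positivity) (rpow_le_one hx0.le hx1 hβ0)
  · refine Integrable.mono'
      ((integrableOn_Ioi_rpow_of_lt (show β - 2 < -1 by linarith) one_pos).const_mul 2)
      hmeas.aestronglyMeasurable ((ae_restrict_iff' measurableSet_Ioi).2 (ae_of_all _ ?_))
    rintro x (hx : 1 < x)
    rw [hnorm x (zero_lt_one.trans hx), mul_comm 2]
    have hx0 : 0 ≤ x := by linarith
    gcongr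
    linarith [neg_one_le_cos (r * x)]

lemma integrableOn_one_sub_cos_mul_div_sq (r : ℝ) :
    IntegrableOn (fun x : ℝ => (1 - cos (r * x)) / x ^ 2) (Ioi 0) := by
  refine (integrableOn_rpow_mul_one_sub_cos le_rfl one_pos r).congr_fun (fun x hx => ?_)
    measurableSet_Ioi
  dsimp only
  rw [zero_sub, rpow_neg hx.le, rpow_two, inv_mul_eq_div]

lemma integrableOn_and_integral_Ioi_zero_of_hasDerivAt {f F : ℝ → ℝ}
    (hF : ∀ x, HasDerivAt F (f x) x) (hf : ∀ x ∈ Ioi (0:ℝ), 0 ≤ f x)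
    (hlim : Tendsto F atTop (𝓝 0)) :
    IntegrableOn f (Ioi 0) ∧ ∫ x in Ioi (0:ℝ), f x = -F 0 :=
  ⟨integrableOn_Ioi_deriv_of_nonneg' (fun x _ => hF x) hf hlim, by
    rw [integral_Ioi_of_hasDerivAt_of_nonneg' (fun x _ => hF x) hf hlim, zero_sub]⟩

lemma integrableOn_and_integral_mul_exp_neg_mul {x : ℝ} (hx : 0 < x) :
    IntegrableOn (fun s : ℝ => s * exp (-(x * s))) (Ioi 0) ∧
      ∫ s in Ioi (0:ℝ), s * exp (-(x * s)) = 1 / x ^ 2 := by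
  have hF : ∀ s, HasDerivAt (fun s => -(exp (-(x * s)) * (s / x + 1 / x ^ 2)))
      (s * exp (-(x * s))) s := by
    intro s
    have := (((hasDerivAt_id s).const_mul x).neg.exp.mul
      (((hasDerivAt_id s).div_const x).add_const (1 / x ^ 2))).neg
    refine this.congr_deriv ?_
    simp only [id, Pi.neg_apply]
    field_simp
    ring
  have hlim : Tendsto (fun s => -(exp (-(x * s)) * (s / x + 1 / x ^ 2))) atTop (𝓝 0) := by
    have h1 := tendsto_rpow_mul_exp_neg_mul_atTop_nhds_zero 1 x hx
    have h0 := tendsto_rpow_mul_exp_neg_mul_atTop_nhds_zero 0 x hx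
    convert ((h1.div_const x).add (h0.div_const (x ^ 2))).neg using 2 with s
    · simp only [rpow_one, rpow_zero, neg_mul]; ring
    · simp
  obtain ⟨hint, hval⟩ := integrableOn_and_integral_Ioi_zero_of_hasDerivAt hF
    (fun s hs => mul_nonneg hs.le (exp_pos _).le) hlim
  exact ⟨hint, by simp [hval]⟩

lemma integrableOn_and_integral_exp_neg_mul_mul_one_sub_cos {s : ℝ} (hs : 0 < s) :
    IntegrableOn (fun x : ℝ => exp (-(s * x)) * (1 - cos x)) (Ioi 0) ∧
      ∫ x in Ioi (0:ℝ), exp (-(s * x)) * (1 - cos x) = 1 / (s * (s ^ 2 + 1)) := by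
  have hF : ∀ x, HasDerivAt
      (fun x => -(exp (-(s * x)) * (1 / s + (sin x - s * cos x) / (s ^ 2 + 1))))
      (exp (-(s * x)) * (1 - cos x)) x := by
    intro x
    have := (((hasDerivAt_id x).const_mul s).neg.exp.mul
      ((((hasDerivAt_sin x).sub ((hasDerivAt_cos x).const_mul s)).div_const (s ^ 2 + 1)).const_add
        (1 / s))).neg
    refine this.congr_deriv ?_
    simp only [id, Pi.neg_apply, Pi.sub_apply]
    field_simp
    ring
  have hlim : Tendsto (fun x => -(exp (-(s * x)) * (1 / s + (sin x - s * cos x) / (s ^ 2 + 1))))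
      atTop (𝓝 0) := by
    have hbdd : IsBoundedUnder (· ≤ ·) atTop
        fun x => ‖1 / s + (sin x - s * cos x) / (s ^ 2 + 1)‖ := by
      refine isBoundedUnder_of ⟨1 / s + (1 + s) / (s ^ 2 + 1), fun x => ?_⟩
      have : ‖sin x - s * cos x‖ ≤ 1 + s := by
        refine (norm_sub_le _ _).trans (add_le_add (abs_sin_le_one x) ?_)
        rw [norm_mul, norm_of_nonneg hs.le]
        exact mul_le_of_le_one_right hs.le (abs_cos_le_one x)
      refine (norm_add_le _ _).trans (add_le_add (by rw [norm_of_nonneg (by positivity)]) ?_)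
      rw [norm_div, norm_of_nonneg (by positivity : (0:ℝ) ≤ s ^ 2 + 1)]
      gcongr
    have hexp := tendsto_rpow_mul_exp_neg_mul_atTop_nhds_zero 0 s hs
    simp only [rpow_zero, one_mul, neg_mul] at hexp
    simpa using (hexp.zero_mul_isBoundedUnder_le hbdd).neg
  obtain ⟨hint, hval⟩ := integrableOn_and_integral_Ioi_zero_of_hasDerivAt hF
    (fun x _ => mul_nonneg (exp_pos _).le (sub_nonneg.2 (cos_le_one x))) hlim
  refine ⟨hint, ?_⟩
  rw [hval]
  simp only [mul_zero, neg_zero, exp_zero, sin_zero, cos_zero, one_mul, mul_one]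
  field_simp
  ring

theorem integral_one_sub_cos_div_sq : ∫ x in Ioi (0:ℝ), (1 - cos x) / x ^ 2 = π / 2 := by
  set f : ℝ → ℝ → ℝ := fun x s => (1 - cos x) * (s * exp (-(x * s))) with hf
  have hinner : ∀ x ∈ Ioi (0:ℝ), ∫ s in Ioi (0:ℝ), f x s = (1 - cos x) / x ^ 2 := by
    intro x hx
    rw [hf, integral_const_mul, (integrableOn_and_integral_mul_exp_neg_mul hx).2, mul_one_div]
  have houter : ∀ s ∈ Ioi (0:ℝ), ∫ x in Ioi (0:ℝ), f x s = (1 + s ^ 2)⁻¹ := by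
    rintro s (hs : 0 < s)
    have hfs : (fun x => f x s) = fun x => s * (exp (-(s * x)) * (1 - cos x)) := by
      ext x; rw [hf]; ring_nf
    rw [hfs, integral_const_mul, (integrableOn_and_integral_exp_neg_mul_mul_one_sub_cos hs).2]
    field_simp
    ring
  have hint : Integrable (Function.uncurry f)
      ((volume.restrict (Ioi (0:ℝ))).prod (volume.restrict (Ioi (0:ℝ)))) := by
    have hmeas : Continuous (Function.uncurry f) := by rw [hf]; fun_prop
    rw [integrable_prod_iff hmeas.aestronglyMeasurable]
    refine ⟨(ae_restrict_iff' measurableSet_Ioi).2 (ae_of_all _ fun x hx =>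
      (integrableOn_and_integral_mul_exp_neg_mul hx).1.const_mul (1 - cos x)), ?_⟩
    refine (integrableOn_one_sub_cos_mul_div_sq 1).congr_fun (fun x hx => ?_) measurableSet_Ioi
    simp only [one_mul]
    rw [← hinner x hx]
    refine setIntegral_congr_fun measurableSet_Ioi fun s hs => (norm_of_nonneg ?_).symm
    exact mul_nonneg (sub_nonneg.2 (cos_le_one x)) (mul_nonneg hs.le (exp_pos _).le)
  calc ∫ x in Ioi (0:ℝ), (1 - cos x) / x ^ 2
        = ∫ x in Ioi (0:ℝ), ∫ s in Ioi (0:ℝ), f x s :=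
          (setIntegral_congr_fun measurableSet_Ioi hinner).symm
    _ = ∫ s in Ioi (0:ℝ), ∫ x in Ioi (0:ℝ), f x s := integral_integral_swap hint
    _ = ∫ s in Ioi (0:ℝ), (1 + s ^ 2)⁻¹ := setIntegral_congr_fun measurableSet_Ioi houter
    _ = π / 2 := by rw [integral_Ioi_inv_one_add_sq, arctan_zero, sub_zero]

lemma integral_comp_mul_div_sq (g : ℝ → ℝ) {r : ℝ} (hr : 0 < r) :
    ∫ x in Ioi (0:ℝ), g (r * x) / x ^ 2 = r * ∫ x in Ioi (0:ℝ), g x / x ^ 2 := by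
  have hg : (fun x => g (r * x) / x ^ 2) = fun x => r ^ 2 * (g (r * x) / (r * x) ^ 2) := by
    ext x; field_simp
  rw [hg, integral_const_mul, integral_comp_mul_left_Ioi (fun x => g x / x ^ 2) 0 hr, mul_zero,
    smul_eq_mul, ← mul_assoc, sq, mul_assoc r, mul_inv_cancel₀ hr.ne', mul_one]

lemma integral_one_sub_cos_mul_div_sq {r : ℝ} (hr : 0 < r) :
    ∫ x in Ioi (0:ℝ), (1 - cos (r * x)) / x ^ 2 = r * (π / 2) := by
  rw [integral_comp_mul_div_sq (fun x => 1 - cos x) hr, integral_one_sub_cos_div_sq]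

lemma tendsto_mul_one_sub_exp_neg_mul_inv (k : ℝ) :
    Tendsto (fun x : ℝ => x * (1 - exp (-(k * x⁻¹)))) atTop (𝓝 k) := by
  have hderiv : HasDerivAt (fun y => 1 - exp (-(k * y))) k 0 := by
    simpa using ((hasDerivAt_id (0:ℝ)).const_mul k).neg.exp.const_sub 1
  have hinv : Tendsto (fun x : ℝ => x⁻¹) atTop (𝓝[≠] 0) :=
    tendsto_inv_atTop_nhdsGT_zero.mono_right (nhdsWithin_mono _ fun _ hy => ne_of_gt hy)
  refine ((hasDerivAt_iff_tendsto_slope_zero.1 hderiv).comp hinv).congr fun x => ?_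
  simp

lemma tendsto_rpow_mul_integral_one_sub_exp_neg {α b : ℝ} (hα0 : 0 < α) (hα1 : α < 1)
    (hb : 0 ≤ b) :
    Tendsto (fun L : ℝ => L ^ α *
        ∫ φ in Ioi (0:ℝ), (1 - exp (-(b * (φ / L) ^ α))) * (1 - cos φ) / φ ^ 2)
      atTop (𝓝 (b * ∫ φ in Ioi (0:ℝ), φ ^ (α - 2) * (1 - cos φ))) := by
  have hscale : ∀ L φ : ℝ, 0 < L → 0 < φ →
      b * (φ / L) ^ α = b * φ ^ α * (L ^ α)⁻¹ :=
    fun L φ hL hφ => by rw [div_rpow hφ.le hL.le, mul_assoc, div_eq_mul_inv]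
  have hpow : ∀ φ : ℝ, 0 < φ → φ ^ (α - 2) = φ ^ α / φ ^ 2 := fun φ hφ => by
    rw [rpow_sub hφ, rpow_two]
  have hdom : IntegrableOn (fun φ => b * (φ ^ (α - 2) * (1 - cos φ))) (Ioi 0) := by
    have h := (integrableOn_rpow_mul_one_sub_cos hα0.le hα1 1).const_mul b
    simp only [one_mul] at h
    exact h
  simp_rw [← integral_const_mul]
  refine tendsto_integral_filter_of_dominated_convergence _
    (.of_forall fun L => (by fun_prop : Measurable _).aestronglyMeasurable) ?_ hdom
    ((ae_restrict_iff' measurableSet_Ioi).2 (ae_of_all _ fun φ (hφ : 0 < φ) => ?_))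
  · filter_upwards [eventually_gt_atTop 0] with L hL
    refine (ae_restrict_iff' measurableSet_Ioi).2 (ae_of_all _ fun φ (hφ : 0 < φ) => ?_)
    -- `1 - e^{-u} ≤ u` turns the damping into `b φ^α L^{-α}`
    have hu : 0 ≤ b * (φ / L) ^ α := by positivity
    have hexp := one_sub_le_exp_neg (b * (φ / L) ^ α)
    have hdamp : 0 ≤ 1 - exp (-(b * (φ / L) ^ α)) :=
      sub_nonneg.2 (exp_le_one_iff.2 (by linarith))
    have hcos : 0 ≤ 1 - cos φ := sub_nonneg.2 (cos_le_one φ)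
    rw [norm_of_nonneg (by positivity)]
    calc L ^ α * ((1 - exp (-(b * (φ / L) ^ α))) * (1 - cos φ) / φ ^ 2)
        ≤ L ^ α * (b * (φ / L) ^ α * (1 - cos φ) / φ ^ 2) := by gcongr; linarith
      _ = b * (φ ^ (α - 2) * (1 - cos φ)) := by
        rw [hscale L φ hL hφ, hpow φ hφ]
        field_simp
  · have hlim := ((tendsto_mul_one_sub_exp_neg_mul_inv (b * φ ^ α)).comp
      (tendsto_rpow_atTop hα0)).mul_const ((1 - cos φ) / φ ^ 2)
    rw [hpow φ hφ]
    convert hlim.congr' ?_ using 2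
    · ring
    · filter_upwards [eventually_gt_atTop 0] with L hL
      simp only [Function.comp_apply, hscale L φ hL hφ]
      ring

lemma numVar_eq_mul_integral {α c a t L : ℝ} (hc : 0 ≤ c) (ha : 0 < a) (ht : 0 ≤ t)
    (hL : 0 < L) :
    numVar α c a t L = 2 / (π * a) * L *
      ∫ φ in Ioi (0:ℝ), (1 - exp (-(2 * c * t * (φ / L) ^ α))) * (1 - cos φ) / φ ^ 2 := by
  set r := L / a with hr_def
  have hr : 0 < r := div_pos hL ha
  set g : ℝ → ℝ := fun φ => (1 - exp (-(2 * c * t * (φ / L) ^ α))) * (1 - cos φ) with hg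
  have hgr : ∀ θ,
      g (r * θ) = (1 - exp (-(2 * c * t * (θ / a) ^ α))) * (1 - cos (r * θ)) := by
    intro θ
    simp only [hg, hr_def]
    rw [show L / a * θ / L = θ / a by field_simp]
  have hsplit : ∀ θ, exp (-(2 * c * t * (θ / a) ^ α)) * (cos (L * θ / a) - 1) / θ ^ 2 =
      g (r * θ) / θ ^ 2 - (1 - cos (r * θ)) / θ ^ 2 := by
    intro θ
    rw [hgr, hr_def, mul_div_right_comm L θ a]
    ring
  have hint : IntegrableOn (fun θ => g (r * θ) / θ ^ 2) (Ioi 0) := by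
    refine (integrableOn_one_sub_cos_mul_div_sq r).mono'
      (by fun_prop : Measurable _).aestronglyMeasurable
      ((ae_restrict_iff' measurableSet_Ioi).2 (ae_of_all _ fun θ (hθ : 0 < θ) => ?_))
    have hu : 0 ≤ 2 * c * t * (θ / a) ^ α := by positivity
    have hexp : exp (-(2 * c * t * (θ / a) ^ α)) ≤ 1 := exp_le_one_iff.2 (by linarith)
    have hcos : 0 ≤ 1 - cos (r * θ) := sub_nonneg.2 (cos_le_one _)
    rw [hgr, norm_of_nonneg (div_nonneg (mul_nonneg (by linarith) hcos) (by positivity))]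
    gcongr
    exact mul_le_of_le_one_left hcos (by linarith [exp_pos (-(2 * c * t * (θ / a) ^ α))])
  unfold numVar
  simp_rw [hsplit]
  rw [integral_sub hint (integrableOn_one_sub_cos_mul_div_sq r),
    integral_one_sub_cos_mul_div_sq hr, integral_comp_mul_div_sq g hr, hr_def]
  field_simp
  ring

lemma integral_rpow_mul_one_sub_cos_pos {β : ℝ} (hβ0 : 0 ≤ β) (hβ1 : β < 1) :
    0 < ∫ φ in Ioi (0:ℝ), φ ^ (β - 2) * (1 - cos φ) := by
  have hint := integrableOn_rpow_mul_one_sub_cos hβ0 hβ1 1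
  simp only [one_mul] at hint
  rw [setIntegral_pos_iff_support_of_nonneg_ae
    ((ae_restrict_iff' measurableSet_Ioi).2 (ae_of_all _ fun φ (hφ : 0 < φ) =>
      mul_nonneg (rpow_nonneg hφ.le _) (sub_nonneg.2 (cos_le_one φ)))) hint]
  have hsub : Ioo (π / 2) π ⊆
      (Function.support fun φ : ℝ => φ ^ (β - 2) * (1 - cos φ)) ∩ Ioi 0 := by
    rintro φ ⟨hφ1, hφ2⟩
    have hφ0 : 0 < φ := by linarith [pi_pos]
    have hcos : cos φ < 0 := cos_neg_of_pi_div_two_lt_of_lt hφ1 (by linarith)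
    exact ⟨(mul_pos (rpow_pos_of_pos hφ0 _) (by linarith)).ne', hφ0⟩
  refine lt_of_lt_of_le ?_ (measure_mono hsub)
  rw [volume_Ioo, ENNReal.ofReal_pos]
  linarith [pi_pos]

theorem numVar_power_law_growth (α c a t : ℝ) (hα : α ∈ Set.Ioo (0:ℝ) 1)
    (hc : 0 < c) (ha : 0 < a) (ht : 0 < t) :
    0 < (4 * c * t / (a * Real.pi)) *
        (∫ φ in Set.Ioi (0:ℝ), φ ^ (α - 2) * (1 - Real.cos φ)) ∧
      Tendsto (fun L : ℝ => L ^ (α - 1) * numVar α c a t L) atTop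
        (nhds ((4 * c * t / (a * Real.pi)) *
          ∫ φ in Set.Ioi (0:ℝ), φ ^ (α - 2) * (1 - Real.cos φ))) := by
  obtain ⟨hα0, hα1⟩ := hα
  refine ⟨mul_pos (by positivity) (integral_rpow_mul_one_sub_cos_pos hα0.le hα1), ?_⟩
  have hlim := (tendsto_rpow_mul_integral_one_sub_exp_neg hα0 hα1
    (by positivity : 0 ≤ 2 * c * t)).const_mul (2 / (π * a))
  convert hlim.congr' ?_ using 2
  · ring
  · filter_upwards [eventually_gt_atTop 0] with L hL
    rw [numVar_eq_mul_integral hc.le ha ht.le hL, rpow_sub_one hL.ne']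
    field_simp
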